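/- There is an order-preserving bijection from the minuscule lattice B_{n-1}(ϖ_{n-1}) to the lattice ⋃_{d=0}^{n-1} I(d,n-1) (Young's lattice H_{n-1} with top and bottom elements adjoined), sending a tuple (w_1,...,w_{n-1}) with w_d ≤ n-1 < w_{d+1} to its truncation (w_1,...,w_d). -/
import Mathlib


/-- The minuscule lattice `B_{n-1}(ϖ_{n-1})`: strictly increasing `(n-1)`-tuples in
`{1,...,2n}` meeting each pair `{j, 2n-j}` (for `1 ≤ j ≤ n-1`) in exactly one
element; ordered componentwise. -/
def MinusculeB (n : ℕ) :=
  {w : Fin (n - 1) → ℕ //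
    StrictMono w ∧ (∀ i, 1 ≤ w i ∧ w i ≤ 2 * n) ∧
    ∀ j, 1 ≤ j → j ≤ n - 1 → ((∃ i, w i = j) ↔ ¬ ∃ i, w i = 2 * n - j)}

/-- Young's lattice `H_{n-1}` with top and bottom adjoined: the disjoint union of the
`I(d, n-1)` for `0 ≤ d ≤ n-1`. -/
def YoungHat (n : ℕ) :=
  Σ d : Fin n, {a : Fin (d : ℕ) → ℕ // StrictMono a ∧ ∀ i, 1 ≤ a i ∧ a i ≤ n - 1}

/-- The order on `YoungHat n`: `(a_1,...,a_r) ≥ (b_1,...,b_s)` iff `r ≤ s` and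
`a_i ≥ b_i` for `1 ≤ i ≤ r`; i.e. `x ≤ y` iff `y` is a shorter tuple and `x` is
componentwise at most `y` on the common indices. -/
def YoungHat.le (n : ℕ) (x y : YoungHat n) : Prop :=
  ∃ h : (y.1 : ℕ) ≤ (x.1 : ℕ), ∀ i : Fin (y.1 : ℕ), x.2.1 (Fin.castLE h i) ≤ y.2.1 i

open Finset

private lemma lt_card_filter_iff {m : ℕ} (p : Fin m → Prop) [DecidablePred p]
    (hdc : ∀ i j : Fin m, i ≤ j → p j → p i) (i : Fin m) :
    (i : ℕ) < (univ.filter p).card ↔ p i := by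
  constructor
  · intro h
    by_contra hp
    have hsub : univ.filter p ⊆ Finset.Iio i := by
      intro j hj
      simp only [mem_filter] at hj
      rw [Finset.mem_Iio]
      by_contra hlt
      exact hp (hdc i j (le_of_not_gt hlt) hj.2)
    have := Finset.card_le_card hsub
    rw [Fin.card_Iio] at this
    omega
  · intro hp
    have hsub : Finset.Iic i ⊆ univ.filter p := by
      intro j hj
      rw [Finset.mem_Iic] at hj
      exact mem_filter.mpr ⟨mem_univ _, hdc j i hj hp⟩
    have := Finset.card_le_card hsub
    rw [Fin.card_Iic] at this
    omega

def dOf (n : ℕ) (w : MinusculeB n) : ℕ := (univ.filter (fun i => w.1 i ≤ n - 1)).card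

lemma dOf_le (n : ℕ) (w : MinusculeB n) : dOf n w ≤ n - 1 := by
  have := Finset.card_filter_le univ (fun i => w.1 i ≤ n - 1)
  simpa [dOf] using this

lemma lt_dOf_iff (n : ℕ) (w : MinusculeB n) (i : Fin (n - 1)) :
    (i : ℕ) < dOf n w ↔ w.1 i ≤ n - 1 :=
  lt_card_filter_iff _ (fun i j hij hj => le_trans (w.2.1.monotone hij) hj) i

def theta (n : ℕ) (hn : 2 ≤ n) (w : MinusculeB n) : YoungHat n :=
  ⟨⟨dOf n w, by have := dOf_le n w; omega⟩,
   ⟨fun i => w.1 (Fin.castLE (dOf_le n w) i),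
    w.2.1.comp (Fin.strictMono_castLE (dOf_le n w)),
    fun i => ⟨(w.2.2.1 _).1, (lt_dOf_iff n w _).1 i.2⟩⟩⟩

def Rw (n : ℕ) (w : MinusculeB n) : Finset ℕ := univ.image w.1

lemma mem_Rw {n : ℕ} {w : MinusculeB n} {x : ℕ} : x ∈ Rw n w ↔ ∃ i, w.1 i = x := by
  simp [Rw]

lemma card_Rw (n : ℕ) (w : MinusculeB n) : (Rw n w).card = n - 1 := by
  rw [Rw, card_image_of_injective _ w.2.1.injective, card_univ, Fintype.card_fin]

def Sset (n : ℕ) (A : Finset ℕ) : Finset ℕ :=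
  A ∪ (Finset.Icc 1 (n - 1) \ A).image (fun j => 2 * n - j)

lemma card_Sset {n : ℕ} (hn : 2 ≤ n) {A : Finset ℕ} (hA : A ⊆ Finset.Icc 1 (n - 1)) :
    (Sset n A).card = n - 1 := by
  have hinj : Set.InjOn (fun j => 2 * n - j) ((Finset.Icc 1 (n - 1) \ A : Finset ℕ) : Set ℕ) := by
    intro a ha b hb hab
    simp only [mem_coe, Finset.mem_sdiff, Finset.mem_Icc] at ha hb
    simp only at hab
    omega
  have hdisj : Disjoint A ((Finset.Icc 1 (n - 1) \ A).image (fun j => 2 * n - j)) := by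
    rw [Finset.disjoint_left]
    intro x hxA hxB
    obtain ⟨j, hj, rfl⟩ := Finset.mem_image.1 hxB
    rw [Finset.mem_sdiff, Finset.mem_Icc] at hj
    have := Finset.mem_Icc.1 (hA hxA)
    omega
  have hAcard := Finset.card_le_card hA
  rw [Nat.card_Icc] at hAcard
  rw [Sset, Finset.card_union_of_disjoint hdisj, Finset.card_image_of_injOn hinj,
    Finset.card_sdiff_of_subset hA, Nat.card_Icc]
  omega

lemma Sset_mem_bounds {n : ℕ} (hn : 2 ≤ n) {A : Finset ℕ} (hA : A ⊆ Finset.Icc 1 (n - 1))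
    {x : ℕ} (hx : x ∈ Sset n A) : 1 ≤ x ∧ x ≤ 2 * n ∧ (x ≤ n - 1 ↔ x ∈ A) := by
  rcases Finset.mem_union.1 hx with h | h
  · have := Finset.mem_Icc.1 (hA h)
    refine ⟨by omega, by omega, ⟨fun _ => h, fun _ => by omega⟩⟩
  · obtain ⟨j, hj, rfl⟩ := Finset.mem_image.1 h
    rw [Finset.mem_sdiff, Finset.mem_Icc] at hj
    refine ⟨by omega, by omega, ⟨fun hle => absurd hle (by omega), fun hmem => ?_⟩⟩
    have := Finset.mem_Icc.1 (hA hmem)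
    omega

lemma Rw_eq_Sset (n : ℕ) (hn : 2 ≤ n) (w : MinusculeB n) :
    Rw n w = Sset n (Rw n w ∩ Finset.Icc 1 (n - 1)) := by
  set A := Rw n w ∩ Finset.Icc 1 (n - 1) with hAdef
  set T := (Finset.Icc 1 (n - 1)).image (fun j => if j ∈ Rw n w then j else 2 * n - j) with hTdef
  have hTsub : T ⊆ Rw n w := by
    intro x hx
    obtain ⟨j, hj, rfl⟩ := Finset.mem_image.1 hx
    rw [Finset.mem_Icc] at hj
    by_cases h : j ∈ Rw n w
    · simpa [h] using h
    · simp only [h, if_false]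
      rw [mem_Rw]
      have hiff := w.2.2.2 j hj.1 hj.2
      rw [mem_Rw] at h
      exact not_not.1 (mt hiff.2 h)
  have hTcard : T.card = n - 1 := by
    rw [hTdef, Finset.card_image_of_injOn, Nat.card_Icc]
    · omega
    · intro a ha b hb hab
      simp only [coe_Icc, Set.mem_Icc] at ha hb
      by_cases h1 : a ∈ Rw n w <;> by_cases h2 : b ∈ Rw n w <;>
        simp only [h1, h2, if_true, if_false] at hab <;> omega
  have hTR : T = Rw n w :=
    Finset.eq_of_subset_of_card_le hTsub (by rw [hTcard, card_Rw])
  rw [← hTR]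
  ext x
  constructor
  · intro hx
    obtain ⟨j, hj, rfl⟩ := Finset.mem_image.1 hx
    by_cases h : j ∈ Rw n w
    · simp only [h, if_true]
      exact Finset.mem_union_left _ (Finset.mem_inter.2 ⟨h, hj⟩)
    · simp only [h, if_false]
      refine Finset.mem_union_right _ (Finset.mem_image.2 ⟨j, ?_, rfl⟩)
      rw [Finset.mem_sdiff, hAdef, Finset.mem_inter]
      exact ⟨hj, fun hc => h hc.1⟩
  · intro hx
    rcases Finset.mem_union.1 hx with h | h
    · rw [hAdef, Finset.mem_inter] at h
      exact Finset.mem_image.2 ⟨x, h.2, by simp [h.1]⟩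
    · obtain ⟨j, hj, rfl⟩ := Finset.mem_image.1 h
      rw [Finset.mem_sdiff, hAdef, Finset.mem_inter] at hj
      have hjR : j ∉ Rw n w := fun hc => hj.2 ⟨hc, hj.1⟩
      exact Finset.mem_image.2 ⟨j, hj.1, by simp [hjR]⟩

lemma mem_Aw_iff (n : ℕ) (w : MinusculeB n) (x : ℕ) :
    x ∈ Rw n w ∩ Finset.Icc 1 (n - 1) ↔
      ∃ i : Fin (dOf n w), w.1 (Fin.castLE (dOf_le n w) i) = x := by
  rw [Finset.mem_inter, mem_Rw, Finset.mem_Icc]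
  constructor
  · rintro ⟨⟨i, rfl⟩, h1, h2⟩
    have hi : (i : ℕ) < dOf n w := (lt_dOf_iff n w i).2 h2
    exact ⟨⟨i, hi⟩, by congr 1⟩
  · rintro ⟨i, rfl⟩
    have hle : w.1 (Fin.castLE (dOf_le n w) i) ≤ n - 1 := (lt_dOf_iff n w _).1 i.2
    exact ⟨⟨_, rfl⟩, (w.2.2.1 _).1, hle⟩

lemma strictMono_ext {m : ℕ} {f g : Fin m → ℕ} (hf : StrictMono f) (hg : StrictMono g)
    (h : univ.image f = univ.image g) : f = g := by
  have hcard : (univ.image f).card = m := by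
    rw [card_image_of_injective _ hf.injective, card_univ, Fintype.card_fin]
  have h1 := Finset.orderEmbOfFin_unique hcard (fun x => mem_image_of_mem f (mem_univ x)) hf
  have h2 := Finset.orderEmbOfFin_unique hcard
    (f := g) (fun x => by rw [h]; exact mem_image_of_mem g (mem_univ x)) hg
  exact h1.trans h2.symm

lemma YoungHat.ext' {n : ℕ} {x y : YoungHat n} (h1 : (x.1 : ℕ) = (y.1 : ℕ))
    (h2 : ∀ (j : ℕ) (hx : j < (x.1 : ℕ)) (hy : j < (y.1 : ℕ)),
      x.2.1 ⟨j, hx⟩ = y.2.1 ⟨j, hy⟩) : x = y := by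
  obtain ⟨dx, fx, hfx⟩ := x
  obtain ⟨dy, fy, hfy⟩ := y
  have hd : dx = dy := Fin.ext h1
  subst hd
  refine congrArg (Sigma.mk dx) (Subtype.ext ?_)
  funext i
  exact h2 i.1 i.2 i.2

lemma dOf_eq {n : ℕ} (w : MinusculeB n) (d0 : ℕ) (hd0 : d0 ≤ n - 1)
    (h : ∀ i : Fin (n - 1), w.1 i ≤ n - 1 ↔ (i : ℕ) < d0) : dOf n w = d0 := by
  have hle := dOf_le n w
  rcases lt_trichotomy (dOf n w) d0 with h1 | h1 | h1
  · have hi : (dOf n w) < n - 1 := lt_of_lt_of_le h1 hd0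
    have := (lt_dOf_iff n w ⟨dOf n w, hi⟩).2 ((h ⟨dOf n w, hi⟩).2 (by simpa using h1))
    simp at this
  · exact h1
  · have hi : d0 < n - 1 := lt_of_lt_of_le h1 hle
    have := (h ⟨d0, hi⟩).1 ((lt_dOf_iff n w ⟨d0, hi⟩).1 (by simpa using h1))
    simp at this

lemma theta_injective (n : ℕ) (hn : 2 ≤ n) : Function.Injective (theta n hn) := by
  intro v w h
  have h2 : Set.range (fun i : Fin (dOf n v) => v.1 (Fin.castLE (dOf_le n v) i)) =
      Set.range (fun i : Fin (dOf n w) => w.1 (Fin.castLE (dOf_le n w) i)) :=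
    congrArg (fun y : YoungHat n => Set.range y.2.1) h
  have hAw : Rw n v ∩ Finset.Icc 1 (n - 1) = Rw n w ∩ Finset.Icc 1 (n - 1) := by
    ext x
    rw [mem_Aw_iff, mem_Aw_iff]
    constructor
    · rintro ⟨i, rfl⟩
      exact Set.mem_range.1 (h2 ▸ Set.mem_range_self i)
    · rintro ⟨i, rfl⟩
      exact Set.mem_range.1 (h2.symm ▸ Set.mem_range_self i)
  have hR : Rw n v = Rw n w := by
    rw [Rw_eq_Sset n hn v, Rw_eq_Sset n hn w, hAw]
  exact Subtype.ext (strictMono_ext v.2.1 w.2.1 hR)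

lemma theta_surjective (n : ℕ) (hn : 2 ≤ n) : Function.Surjective (theta n hn) := by
  rintro ⟨d, a, hamono, habd⟩
  set A : Finset ℕ := univ.image a with hAdef
  have hAIcc : A ⊆ Finset.Icc 1 (n - 1) := by
    intro x hx
    obtain ⟨i, _, rfl⟩ := Finset.mem_image.1 hx
    exact Finset.mem_Icc.2 (habd i)
  have hAcard : A.card = (d : ℕ) := by
    rw [hAdef, card_image_of_injective _ hamono.injective, card_univ, Fintype.card_fin]
  have hScard : (Sset n A).card = n - 1 := card_Sset hn hAIcc
  set w0 : Fin (n - 1) → ℕ := fun i => (Sset n A).orderEmbOfFin hScard i with hw0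
  have hw0mono : StrictMono w0 := ((Sset n A).orderEmbOfFin hScard).strictMono
  have hw0mem : ∀ i, w0 i ∈ Sset n A := fun i => Finset.orderEmbOfFin_mem _ _ i
  have hw0range : ∀ x ∈ Sset n A, ∃ i, w0 i = x := by
    intro x hx
    have : x ∈ Set.range ((Sset n A).orderEmbOfFin hScard) := by
      rw [Finset.range_orderEmbOfFin]; exact hx
    exact this
  have hjS : ∀ j, 1 ≤ j → j ≤ n - 1 → (j ∈ Sset n A ↔ j ∈ A) := by
    intro j h1 h2
    exact ⟨fun hj => ((Sset_mem_bounds hn hAIcc hj).2.2).1 h2,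
      fun hj => Finset.mem_union_left _ hj⟩
  have h2S : ∀ j, 1 ≤ j → j ≤ n - 1 → ((2 * n - j) ∈ Sset n A ↔ j ∉ A) := by
    intro j h1 h2
    constructor
    · intro hj
      rcases Finset.mem_union.1 hj with h | h
      · have := Finset.mem_Icc.1 (hAIcc h); omega
      · obtain ⟨j', hj', hjj⟩ := Finset.mem_image.1 h
        rw [Finset.mem_sdiff, Finset.mem_Icc] at hj'
        have hjj' : j' = j := by omega
        subst hjj'; exact hj'.2
    · intro hj
      exact Finset.mem_union_right _ (Finset.mem_image.2
        ⟨j, Finset.mem_sdiff.2 ⟨Finset.mem_Icc.2 ⟨h1, h2⟩, hj⟩, rfl⟩)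
  set wS : MinusculeB n := ⟨w0, hw0mono,
    fun i => ⟨(Sset_mem_bounds hn hAIcc (hw0mem i)).1, (Sset_mem_bounds hn hAIcc (hw0mem i)).2.1⟩,
    by
      intro j h1 h2
      constructor
      · rintro ⟨i, hi⟩ ⟨i', hi'⟩
        have hjA : j ∈ A := (hjS j h1 h2).1 (hi ▸ hw0mem i)
        exact ((h2S j h1 h2).1 (hi' ▸ hw0mem i')) hjA
      · intro hne
        have hjA : j ∈ A := by
          by_contra hjA
          exact hne (hw0range _ ((h2S j h1 h2).2 hjA))
        exact hw0range _ ((hjS j h1 h2).2 hjA)⟩ with hwS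
  refine ⟨wS, ?_⟩
  have himage : (univ.filter (fun i => w0 i ≤ n - 1)).image w0 = A := by
    ext x
    simp only [Finset.mem_image, Finset.mem_filter, Finset.mem_univ, true_and]
    constructor
    · rintro ⟨i, hle, rfl⟩
      exact ((Sset_mem_bounds hn hAIcc (hw0mem i)).2.2).1 hle
    · intro hx
      obtain ⟨i, hi⟩ := hw0range x (Finset.mem_union_left _ hx)
      have hb := Finset.mem_Icc.1 (hAIcc hx)
      exact ⟨i, by rw [hi]; omega, hi⟩
  have hdof : dOf n wS = (d : ℕ) := by
    have hc : ((univ.filter (fun i => w0 i ≤ n - 1)).image w0).card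
        = (univ.filter (fun i => w0 i ≤ n - 1)).card :=
      card_image_of_injective _ hw0mono.injective
    rw [himage, hAcard] at hc
    exact hc.symm
  have hsmall : (fun i : Fin (dOf n wS) => w0 (Fin.castLE (dOf_le n wS) i))
      = ⇑(A.orderEmbOfFin (hAcard.trans hdof.symm)) := by
    apply Finset.orderEmbOfFin_unique
    · intro i
      have hmem := hw0mem (Fin.castLE (dOf_le n wS) i)
      have hle : w0 (Fin.castLE (dOf_le n wS) i) ≤ n - 1 :=
        (lt_dOf_iff n wS (Fin.castLE (dOf_le n wS) i)).1 (by simpa using i.2)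
      exact ((Sset_mem_bounds hn hAIcc hmem).2.2).1 hle
    · exact hw0mono.comp (Fin.strictMono_castLE _)
  have ha : a = ⇑(A.orderEmbOfFin hAcard) :=
    Finset.orderEmbOfFin_unique hAcard (fun x => mem_image_of_mem a (mem_univ x)) hamono
  apply YoungHat.ext'
  · exact hdof
  · intro j hx hy
    show wS.1 (Fin.castLE (dOf_le n wS) ⟨j, hx⟩) = a ⟨j, hy⟩
    have e1 := congrFun hsmall ⟨j, hx⟩
    rw [ha]
    exact e1.trans (Finset.orderEmbOfFin_eq_orderEmbOfFin_iff.2 rfl)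


/-- There is an order-preserving bijection `θ` from the minuscule lattice
`B_{n-1}(ϖ_{n-1})` to `⋃_{d=0}^{n-1} I(d,n-1)`, sending a tuple
`(w_1,...,w_{n-1})` with `w_d ≤ n-1 < w_{d+1}` to its truncation `(w_1,...,w_d)`. -/
theorem minusculeB_orderIso_youngHat (n : ℕ) (hn : 2 ≤ n) :
    ∃ f : MinusculeB n → YoungHat n,
      Function.Bijective f ∧
      (∀ v w : MinusculeB n, (∀ i, v.1 i ≤ w.1 i) → YoungHat.le n (f v) (f w)) ∧
      (∀ (w : MinusculeB n) (d : Fin n),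
        (∀ i : Fin (n - 1), ((i : ℕ) < (d : ℕ) → w.1 i ≤ n - 1) ∧
          ((d : ℕ) ≤ (i : ℕ) → n ≤ w.1 i)) →
        (f w).1 = d ∧
          ∀ (i : Fin (n - 1)) (h : (i : ℕ) < ((f w).1 : ℕ)),
            (f w).2.1 ⟨(i : ℕ), h⟩ = w.1 i) := by
  refine ⟨theta n hn, ⟨theta_injective n hn, theta_surjective n hn⟩, ?_, ?_⟩
  · intro v w h
    have hle : dOf n w ≤ dOf n v := by
      apply Finset.card_le_card
      intro i hi
      rw [Finset.mem_filter] at hi ⊢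
      exact ⟨hi.1, le_trans (h i) hi.2⟩
    refine ⟨hle, ?_⟩
    intro i
    show v.1 (Fin.castLE (dOf_le n v) (Fin.castLE hle i)) ≤ w.1 (Fin.castLE (dOf_le n w) i)
    have he : Fin.castLE (dOf_le n v) (Fin.castLE hle i) = Fin.castLE (dOf_le n w) i :=
      Fin.ext rfl
    rw [he]
    exact h _
  · intro w d hyp
    have hd : dOf n w = (d : ℕ) := by
      have hdn := d.2
      apply dOf_eq w (d : ℕ) (by omega)
      intro i
      constructor
      · intro hle
        by_contra hlt
        have h2 := (hyp i).2 (by omega)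
        omega
      · exact (hyp i).1
    refine ⟨Fin.ext hd, ?_⟩
    intro i h
    show w.1 (Fin.castLE (dOf_le n w) ⟨(i : ℕ), h⟩) = w.1 i
    congr 1
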